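/- Let E be an evident branch and T a set of terms all of type σ. Then T is compatible (pairwise s ∼ t for all s,t ∈ T) if and only if there exists a value a ∈ D(σ) such that t ≈_σ a for every t ∈ T. -/

import Mathlib

/-- Simple types of STT: the type `o` of truth values is `base 0`, sorts are `base (α+1)`. -/
inductive Ty : Type
  | base : ℕ → Ty
  | arr : Ty → Ty → Ty
  deriving DecidableEq

abbrev Ty.o : Ty := Ty.base 0
abbrev Ty.sort (α : ℕ) : Ty := Ty.base (α + 1)

/-- Terms of STT: variables, negation, primitive equality at every type, application,
lambda abstraction. -/
inductive Tm : Ty → Type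
  | var : ℕ → (σ : Ty) → Tm σ
  | neg : Tm (Ty.arr Ty.o Ty.o)
  | eq : (σ : Ty) → Tm (Ty.arr σ (Ty.arr σ Ty.o))
  | app : ∀ {σ τ : Ty}, Tm (Ty.arr σ τ) → Tm σ → Tm τ
  | lam : ℕ → (σ : Ty) → ∀ {τ : Ty}, Tm τ → Tm (Ty.arr σ τ)

def Tm.Not (s : Tm Ty.o) : Tm Ty.o := Tm.app Tm.neg s
def Tm.Eqn {σ : Ty} (s t : Tm σ) : Tm Ty.o := Tm.app (Tm.app (Tm.eq σ) s) t
def Tm.Diseq {σ : Ty} (s t : Tm σ) : Tm Ty.o := Tm.Not (Tm.Eqn s t)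

/-- Argument lists (spines): `Args σ ρ` turns a head of type `σ` into a term of type `ρ`. -/
inductive Args : Ty → Ty → Type
  | nil : ∀ {ρ}, Args ρ ρ
  | cons : ∀ {σ τ ρ}, Tm σ → Args τ ρ → Args (Ty.arr σ τ) ρ

def applyArgs : ∀ {σ ρ : Ty}, Tm σ → Args σ ρ → Tm ρ
  | _, _, s, Args.nil => s
  | _, _, s, Args.cons t a => applyArgs (Tm.app s t) a

def nfArgs (f : (σ : Ty) → Tm σ → Tm σ) : ∀ {σ ρ : Ty}, Args σ ρ → Args σ ρ
  | _, _, Args.nil => Args.nil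
  | _, _, Args.cons t a => Args.cons (f _ t) (nfArgs f a)

/-- Pairs of equi-typed argument lists `s₁ … sₙ` and `t₁ … tₙ`. -/
inductive Args2 : Ty → Ty → Type
  | nil : ∀ {ρ}, Args2 ρ ρ
  | cons : ∀ {σ τ ρ}, Tm σ → Tm σ → Args2 τ ρ → Args2 (Ty.arr σ τ) ρ

def Args2.left : ∀ {σ ρ}, Args2 σ ρ → Args σ ρ
  | _, _, Args2.nil => Args.nil
  | _, _, Args2.cons s _ p => Args.cons s (Args2.left p)

def Args2.right : ∀ {σ ρ}, Args2 σ ρ → Args σ ρ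
  | _, _, Args2.nil => Args.nil
  | _, _, Args2.cons _ t p => Args.cons t (Args2.right p)

/-- The list of disequations `sᵢ ≠ tᵢ` of a pair of argument lists. -/
def Args2.diseqs : ∀ {σ ρ}, Args2 σ ρ → List (Tm Ty.o)
  | _, _, Args2.nil => []
  | _, _, Args2.cons s t p => Tm.Diseq s t :: Args2.diseqs p

/-- Atomic heads: names (variables and the logical constants). -/
inductive Atomic : ∀ {σ : Ty}, Tm σ → Prop
  | var : ∀ n σ, Atomic (Tm.var n σ)
  | neg : Atomic Tm.neg
  | eq : ∀ σ, Atomic (Tm.eq σ)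

/-- Update a substitution at the name `(x, σ0)`. -/
def updS (θ : ℕ → (σ : Ty) → Option (Tm σ)) (x : ℕ) (σ0 : Ty) (t : Tm σ0) :
    ℕ → (σ : Ty) → Option (Tm σ) := fun n σ =>
  if h : n = x ∧ σ = σ0 then some (h.2.symm ▸ t) else θ n σ

/-- A normalization operator with an accompanying substitution operation,
satisfying N1–N3 and S1–S4. -/
structure NormOp : Type where
  nf : ∀ {σ : Ty}, Tm σ → Tm σ
  sub : (ℕ → (σ : Ty) → Option (Tm σ)) → ∀ {σ : Ty}, Tm σ → Tm σ
  n1 : ∀ {σ : Ty} (s : Tm σ), nf (nf s) = nf s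
  n2 : ∀ {σ τ : Ty} (s : Tm (Ty.arr σ τ)) (t : Tm σ), nf (Tm.app (nf s) t) = nf (Tm.app s t)
  n3 : ∀ {σ : Ty} {β : ℕ} (h : Tm σ), Atomic h → ∀ a : Args σ (Ty.base β),
      nf (applyArgs h a) = applyArgs h (nfArgs (fun _ s => nf s) a)
  s1 : ∀ θ (n : ℕ) (σ : Ty), sub θ (Tm.var n σ) = (θ n σ).getD (Tm.var n σ)
  s1neg : ∀ θ, sub θ Tm.neg = Tm.neg
  s1eq : ∀ θ (σ : Ty), sub θ (Tm.eq σ) = Tm.eq σ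
  s2 : ∀ θ {σ τ : Ty} (s : Tm (Ty.arr σ τ)) (t : Tm σ),
      sub θ (Tm.app s t) = Tm.app (sub θ s) (sub θ t)
  s3 : ∀ θ (x : ℕ) (σ : Ty) {τ : Ty} (s : Tm τ) (t : Tm σ),
      nf (Tm.app (sub θ (Tm.lam x σ s)) t) = nf (sub (updS θ x σ t) s)
  s4 : ∀ {σ : Ty} (s : Tm σ), nf (sub (fun _ _ => none) s) = nf s

/-- The evidence conditions for a branch `E`. -/
structure Evident (Ω : NormOp) (E : Set (Tm Ty.o)) : Prop where
  dn : ∀ s : Tm Ty.o, Tm.Not (Tm.Not s) ∈ E → s ∈ E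
  bq : ∀ s t : Tm Ty.o, Tm.Eqn s t ∈ E → (s ∈ E ∧ t ∈ E) ∨ (Tm.Not s ∈ E ∧ Tm.Not t ∈ E)
  be : ∀ s t : Tm Ty.o, Tm.Diseq s t ∈ E → (s ∈ E ∧ Tm.Not t ∈ E) ∨ (Tm.Not s ∈ E ∧ t ∈ E)
  fq : ∀ {σ τ : Ty} (s t : Tm (Ty.arr σ τ)), Tm.Eqn s t ∈ E → ∀ u : Tm σ, Ω.nf u = u →
      Tm.Eqn (Ω.nf (Tm.app s u)) (Ω.nf (Tm.app t u)) ∈ E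
  fe : ∀ {σ τ : Ty} (s t : Tm (Ty.arr σ τ)), Tm.Diseq s t ∈ E →
      ∃ x : ℕ, Tm.Diseq (Ω.nf (Tm.app s (Tm.var x σ))) (Ω.nf (Tm.app t (Tm.var x σ))) ∈ E
  mat : ∀ {σ : Ty} (x : ℕ) (p : Args2 σ Ty.o),
      applyArgs (Tm.var x σ) p.left ∈ E → Tm.Not (applyArgs (Tm.var x σ) p.right) ∈ E →
      ∃ d ∈ p.diseqs, d ∈ E
  dec : ∀ {σ : Ty} {α : ℕ} (x : ℕ) (p : Args2 σ (Ty.sort α)),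
      Tm.Diseq (applyArgs (Tm.var x σ) p.left) (applyArgs (Tm.var x σ) p.right) ∈ E →
      ∃ d ∈ p.diseqs, d ∈ E
  con : ∀ {α : ℕ} (s t u v : Tm (Ty.sort α)), Tm.Eqn s t ∈ E → Tm.Diseq u v ∈ E →
      (Tm.Diseq s u ∈ E ∧ Tm.Diseq t u ∈ E) ∨ (Tm.Diseq s v ∈ E ∧ Tm.Diseq t v ∈ E)

/-- A term `u` is discriminating in `E` if it occurs on one side of a disequation in `E`. -/
def Discriminating (E : Set (Tm Ty.o)) {σ : Ty} (u : Tm σ) : Prop :=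
  ∃ t : Tm σ, Tm.Diseq u t ∈ E ∨ Tm.Diseq t u ∈ E

/-- An `α`-discriminant: a maximal set of `α`-discriminating terms no two of which are
related by a disequation in `E`. -/
def IsDiscriminant (E : Set (Tm Ty.o)) (α : ℕ) (a : Set (Tm (Ty.sort α))) : Prop :=
  (∀ u ∈ a, Discriminating E u) ∧
  (∀ s ∈ a, ∀ t ∈ a, Tm.Diseq s t ∉ E) ∧
  (∀ b : Set (Tm (Ty.sort α)), a ⊆ b → (∀ u ∈ b, Discriminating E u) →
    (∀ s ∈ b, ∀ t ∈ b, Tm.Diseq s t ∉ E) → b = a)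

/-- `s # t`: the disequation `s ≠ t` or `t ≠ s` belongs to `E`. -/
def hashE (E : Set (Tm Ty.o)) {σ : Ty} (s t : Tm σ) : Prop :=
  Tm.Diseq s t ∈ E ∨ Tm.Diseq t s ∈ E

/-- Compatibility of two terms relative to an evident branch, by induction on types. -/
def compat (Ω : NormOp) (E : Set (Tm Ty.o)) : (σ : Ty) → Tm σ → Tm σ → Prop
  | Ty.base 0 => fun s t =>
      ¬(Ω.nf s ∈ E ∧ Tm.Not (Ω.nf t) ∈ E) ∧ ¬(Tm.Not (Ω.nf s) ∈ E ∧ Ω.nf t ∈ E)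
  | Ty.base (α + 1) => fun s t => ¬ hashE E (Ω.nf s) (Ω.nf t)
  | Ty.arr σ τ => fun s t => ∀ u v : Tm σ, compat Ω E σ u v →
      compat Ω E τ (Tm.app s u) (Tm.app t v)

/-- `ExistsPairHashNf Ω E p` holds if `[sᵢ] # [tᵢ]` for some position `i` of `p`. -/
def ExistsPairHashNf (Ω : NormOp) (E : Set (Tm Ty.o)) : ∀ {σ ρ : Ty}, Args2 σ ρ → Prop
  | _, _, Args2.nil => False
  | _, _, Args2.cons s t p => hashE E (Ω.nf s) (Ω.nf t) ∨ ExistsPairHashNf Ω E p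

/-- The value system of an evident branch `E`: at `o` the values are booleans, at a sort the
values are `α`-discriminants, and at function types the logical-relation clause is used. -/
def sem (Ω : NormOp) (E : Set (Tm Ty.o)) : (σ : Ty) → (A : Type) × (Tm σ → A → Prop)
  | Ty.base 0 => ⟨Bool, fun s b => if b then Tm.Not (Ω.nf s) ∉ E else Ω.nf s ∉ E⟩
  | Ty.base (α + 1) => ⟨Set (Tm (Ty.sort α)), fun s a =>
      IsDiscriminant E α a ∧ (Discriminating E (Ω.nf s) → Ω.nf s ∈ a)⟩
  | Ty.arr σ τ =>
      ⟨{x : (sem Ω E σ).1 // ∃ t : Tm σ, (sem Ω E σ).2 t x} → (sem Ω E τ).1,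
       fun s f => ∀ (t : Tm σ) (x : (sem Ω E σ).1) (h : (sem Ω E σ).2 t x),
         (sem Ω E τ).2 (Tm.app s t) (f ⟨x, t, h⟩)⟩

/-- An applicative structure for STT: nonempty domains, `D(στ)` a set of functions
`D(σ) → D(τ)` (extensionality), `D(o) = {0,1}`, together with an assignment for the
variables and logical values for `¬` and `=_σ`. -/
structure Struc : Type 1 where
  D : Ty → Type
  ap : ∀ {σ τ : Ty}, D (Ty.arr σ τ) → D σ → D τ
  ext : ∀ {σ τ : Ty} (f g : D (Ty.arr σ τ)), (∀ a : D σ, ap f a = ap g a) → f = g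
  ne : ∀ σ : Ty, Nonempty (D σ)
  I : ℕ → ∀ σ : Ty, D σ
  bo : D Ty.o ≃ Bool
  negv : D (Ty.arr Ty.o Ty.o)
  eqv : ∀ σ : Ty, D (Ty.arr σ (Ty.arr σ Ty.o))
  hneg : ∀ b : D Ty.o, ap negv b = bo.symm (!(bo b))
  heq : ∀ {σ : Ty} (a b : D σ), ap (ap (eqv σ) a) b = bo.symm true ↔ a = b

/-- Update the assignment of a structure at the name `(m, σ0)`. -/
def updD (M : Struc) (I : ℕ → ∀ σ, M.D σ) (m : ℕ) (σ0 : Ty) (a : M.D σ0) :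
    ℕ → ∀ σ, M.D σ := fun n σ =>
  if h : n = m ∧ σ = σ0 then (h.2.symm ▸ a) else I n σ

/-- The evaluation relation of a logical structure. -/
inductive Eval (M : Struc) : (ℕ → ∀ σ, M.D σ) → ∀ σ : Ty, Tm σ → M.D σ → Prop
  | var : ∀ (I : ℕ → ∀ σ, M.D σ) (n : ℕ) (σ : Ty), Eval M I σ (Tm.var n σ) (I n σ)
  | neg : ∀ I : ℕ → ∀ σ, M.D σ, Eval M I (Ty.arr Ty.o Ty.o) Tm.neg M.negv
  | eq : ∀ (I : ℕ → ∀ σ, M.D σ) (σ : Ty), Eval M I (Ty.arr σ (Ty.arr σ Ty.o)) (Tm.eq σ) (M.eqv σ)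
  | app : ∀ {I : ℕ → ∀ σ, M.D σ} {σ τ : Ty} {s : Tm (Ty.arr σ τ)} {t : Tm σ}
      {f : M.D (Ty.arr σ τ)} {a : M.D σ},
      Eval M I (Ty.arr σ τ) s f → Eval M I σ t a → Eval M I τ (Tm.app s t) (M.ap f a)
  | lam : ∀ {I : ℕ → ∀ σ, M.D σ} (n : ℕ) (σ : Ty) {τ : Ty} (s : Tm τ) (f : M.D (Ty.arr σ τ)),
      (∀ a : M.D σ, Eval M (updD M I n σ a) τ s (M.ap f a)) →
      Eval M I (Ty.arr σ τ) (Tm.lam n σ s) f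

/-- A logical interpretation: a logical structure whose evaluation is total. -/
structure Interp : Type 1 extends Struc where
  total : ∀ (σ : Ty) (s : Tm σ), ∃ a : toStruc.D σ, Eval toStruc toStruc.I σ s a

/-- `M` is a model of the set of formulas `E`. -/
def Satisfies (M : Interp) (E : Set (Tm Ty.o)) : Prop :=
  ∀ s ∈ E, Eval M.toStruc M.I Ty.o s (M.bo.symm true)

/-- A surjective interpretation: every value is denoted by some term. -/
def Surj (M : Interp) : Prop :=
  ∀ (σ : Ty) (a : M.D σ), ∃ s : Tm σ, Eval M.toStruc M.I σ s a

/-- A complete branch: contains `s` or `¬s` for every normal formula `s`. -/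
def CompleteBranch (Ω : NormOp) (E : Set (Tm Ty.o)) : Prop :=
  ∀ s : Tm Ty.o, Ω.nf s = s → s ∈ E ∨ Tm.Not s ∈ E

/-- The abstract consistency conditions on a set of branches `Γ`. -/
structure ACC (Ω : NormOp) (Γ : Set (Set (Tm Ty.o))) : Prop where
  dn : ∀ A ∈ Γ, ∀ s : Tm Ty.o, Tm.Not (Tm.Not s) ∈ A → insert s A ∈ Γ
  bq : ∀ A ∈ Γ, ∀ s t : Tm Ty.o, Tm.Eqn s t ∈ A →
      insert s (insert t A) ∈ Γ ∨ insert (Tm.Not s) (insert (Tm.Not t) A) ∈ Γ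
  be : ∀ A ∈ Γ, ∀ s t : Tm Ty.o, Tm.Diseq s t ∈ A →
      insert s (insert (Tm.Not t) A) ∈ Γ ∨ insert (Tm.Not s) (insert t A) ∈ Γ
  fq : ∀ A ∈ Γ, ∀ {σ τ : Ty} (s t : Tm (Ty.arr σ τ)), Tm.Eqn s t ∈ A → ∀ u : Tm σ, Ω.nf u = u →
      insert (Tm.Eqn (Ω.nf (Tm.app s u)) (Ω.nf (Tm.app t u))) A ∈ Γ
  fe : ∀ A ∈ Γ, ∀ {σ τ : Ty} (s t : Tm (Ty.arr σ τ)), Tm.Diseq s t ∈ A →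
      ∃ x : ℕ, insert (Tm.Diseq (Ω.nf (Tm.app s (Tm.var x σ))) (Ω.nf (Tm.app t (Tm.var x σ)))) A ∈ Γ
  mat : ∀ A ∈ Γ, ∀ {σ : Ty} (x : ℕ) (p : Args2 σ Ty.o),
      applyArgs (Tm.var x σ) p.left ∈ A → Tm.Not (applyArgs (Tm.var x σ) p.right) ∈ A →
      ∃ d ∈ p.diseqs, insert d A ∈ Γ
  dec : ∀ A ∈ Γ, ∀ {σ : Ty} {α : ℕ} (x : ℕ) (p : Args2 σ (Ty.sort α)),
      Tm.Diseq (applyArgs (Tm.var x σ) p.left) (applyArgs (Tm.var x σ) p.right) ∈ A →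
      ∃ d ∈ p.diseqs, insert d A ∈ Γ
  con : ∀ A ∈ Γ, ∀ {α : ℕ} (s t u v : Tm (Ty.sort α)), Tm.Eqn s t ∈ A → Tm.Diseq u v ∈ A →
      insert (Tm.Diseq s u) (insert (Tm.Diseq t u) A) ∈ Γ ∨
      insert (Tm.Diseq s v) (insert (Tm.Diseq t v) A) ∈ Γ

/-- A complete abstract consistency class. -/
def CompleteACC (Ω : NormOp) (Γ : Set (Set (Tm Ty.o))) : Prop :=
  ∀ A ∈ Γ, ∀ s : Tm Ty.o, Ω.nf s = s → insert s A ∈ Γ ∨ insert (Tm.Not s) A ∈ Γ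

/-- Free occurrence of the name `(x, μ)` in a term. -/
def FreeIn (x : ℕ) (μ : Ty) : ∀ {σ : Ty}, Tm σ → Prop
  | _, Tm.var n σ => x = n ∧ μ = σ
  | _, Tm.app s t => FreeIn x μ s ∨ FreeIn x μ t
  | _, Tm.lam n σ s => ¬(x = n ∧ μ = σ) ∧ FreeIn x μ s
  | _, _ => False

/-- A closed branch: contains `x` and `¬x` for a variable `x : o`, or `x ≠ x` at a sort. -/
def ClosedB (A : Set (Tm Ty.o)) : Prop :=
  (∃ x : ℕ, Tm.var x Ty.o ∈ A ∧ Tm.Not (Tm.var x Ty.o) ∈ A) ∨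
  (∃ (α : ℕ) (x : ℕ), Tm.Diseq (Tm.var x (Ty.sort α)) (Tm.var x (Ty.sort α)) ∈ A)

/-- Refutability in the cut-free tableau calculus `T` for STT, with the restrictions that
rules are applied only to non-closed branches and functional extensionality is applied only
once per disequation. -/
inductive Refutable (Ω : NormOp) : Set (Tm Ty.o) → Prop
  | closed : ∀ {A : Set (Tm Ty.o)}, ClosedB A → Refutable Ω A
  | dn : ∀ {A : Set (Tm Ty.o)} {s : Tm Ty.o}, ¬ClosedB A → Tm.Not (Tm.Not s) ∈ A →
      Refutable Ω (insert s A) → Refutable Ω A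
  | bq : ∀ {A : Set (Tm Ty.o)} (s t : Tm Ty.o), ¬ClosedB A → Tm.Eqn s t ∈ A →
      Refutable Ω (insert s (insert t A)) →
      Refutable Ω (insert (Tm.Not s) (insert (Tm.Not t) A)) → Refutable Ω A
  | be : ∀ {A : Set (Tm Ty.o)} (s t : Tm Ty.o), ¬ClosedB A → Tm.Diseq s t ∈ A →
      Refutable Ω (insert s (insert (Tm.Not t) A)) →
      Refutable Ω (insert (Tm.Not s) (insert t A)) → Refutable Ω A
  | fq : ∀ {A : Set (Tm Ty.o)} {σ τ : Ty} (s t : Tm (Ty.arr σ τ)) (u : Tm σ), ¬ClosedB A →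
      Tm.Eqn s t ∈ A → Ω.nf u = u →
      Refutable Ω (insert (Tm.Eqn (Ω.nf (Tm.app s u)) (Ω.nf (Tm.app t u))) A) → Refutable Ω A
  | fe : ∀ {A : Set (Tm Ty.o)} {σ τ : Ty} (s t : Tm (Ty.arr σ τ)) (x : ℕ), ¬ClosedB A →
      Tm.Diseq s t ∈ A → (∀ u ∈ A, ¬ FreeIn x σ u) →
      (¬∃ y : ℕ, Tm.Diseq (Ω.nf (Tm.app s (Tm.var y σ))) (Ω.nf (Tm.app t (Tm.var y σ))) ∈ A) →
      Refutable Ω (insert (Tm.Diseq (Ω.nf (Tm.app s (Tm.var x σ))) (Ω.nf (Tm.app t (Tm.var x σ)))) A) →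
      Refutable Ω A
  | mat : ∀ {A : Set (Tm Ty.o)} {σ : Ty} (x : ℕ) (p : Args2 σ Ty.o), ¬ClosedB A →
      applyArgs (Tm.var x σ) p.left ∈ A → Tm.Not (applyArgs (Tm.var x σ) p.right) ∈ A →
      (∀ d ∈ p.diseqs, Refutable Ω (insert d A)) → Refutable Ω A
  | dec : ∀ {A : Set (Tm Ty.o)} {σ : Ty} {α : ℕ} (x : ℕ) (p : Args2 σ (Ty.sort α)), ¬ClosedB A →
      Tm.Diseq (applyArgs (Tm.var x σ) p.left) (applyArgs (Tm.var x σ) p.right) ∈ A →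
      (∀ d ∈ p.diseqs, Refutable Ω (insert d A)) → Refutable Ω A
  | con : ∀ {A : Set (Tm Ty.o)} {α : ℕ} (s t u v : Tm (Ty.sort α)), ¬ClosedB A →
      Tm.Eqn s t ∈ A → Tm.Diseq u v ∈ A →
      Refutable Ω (insert (Tm.Diseq s u) (insert (Tm.Diseq t u) A)) →
      Refutable Ω (insert (Tm.Diseq s v) (insert (Tm.Diseq t v) A)) → Refutable Ω A

/-!
Compatibility is a logical relation, and the heart of the matter is its fundamental lemma:
every term is compatible with itself. The evidence conditions are exactly what the constants
need: `mat` and `dec` make a variable applied to two argument spines compatible as soon as no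
paired arguments have normal forms related by a disequation, which together with `fe` shows
that compatible terms are never related by a disequation; `dn` handles `¬`, and `bq`, `con`,
`fe`, `fq` handle `=`.

Given reflexivity, values are built by induction on types: at `o` the Boolean forced by the
branch, at a sort a maximal discriminant (Zorn) containing the discriminating normal forms of
`T`, and at `σ → τ` the function sending a value `x` to a common value of all `s w` with
`s ∈ T` and `w ≈ x`. Conversely, terms sharing a value are compatible; at `σ → τ`, compatible
arguments `u ∼ v` have a common value because `{u, v}` is compatible by reflexivity.
-/

namespace Args

def snoc : ∀ {σ τ ρ : Ty}, Args σ (Ty.arr τ ρ) → Tm τ → Args σ ρ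
  | _, _, _, nil, u => cons u nil
  | _, _, _, cons t a, u => cons t (a.snoc u)

end Args

theorem applyArgs_snoc : ∀ {σ τ ρ : Ty} (h : Tm σ) (a : Args σ (Ty.arr τ ρ)) (u : Tm τ),
    applyArgs h (a.snoc u) = Tm.app (applyArgs h a) u
  | _, _, _, _, .nil, _ => rfl
  | _, _, _, h, .cons t a, u => applyArgs_snoc (Tm.app h t) a u

namespace Args2

def snoc : ∀ {σ τ ρ : Ty}, Args2 σ (Ty.arr τ ρ) → Tm τ → Tm τ → Args2 σ ρ
  | _, _, _, nil, u, v => cons u v nil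
  | _, _, _, cons s t p, u, v => cons s t (p.snoc u v)

def swap : ∀ {σ ρ : Ty}, Args2 σ ρ → Args2 σ ρ
  | _, _, nil => nil
  | _, _, cons s t p => cons t s p.swap

def normalize (Ω : NormOp) : ∀ {σ ρ : Ty}, Args2 σ ρ → Args2 σ ρ
  | _, _, nil => nil
  | _, _, cons s t p => cons (Ω.nf s) (Ω.nf t) (p.normalize Ω)

theorem left_snoc : ∀ {σ τ ρ : Ty} (p : Args2 σ (Ty.arr τ ρ)) (u v : Tm τ),
    (p.snoc u v).left = p.left.snoc u
  | _, _, _, nil, _, _ => rfl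
  | _, _, _, cons s _ p, u, v => congrArg (Args.cons s) (left_snoc p u v)

theorem right_snoc : ∀ {σ τ ρ : Ty} (p : Args2 σ (Ty.arr τ ρ)) (u v : Tm τ),
    (p.snoc u v).right = p.right.snoc v
  | _, _, _, nil, _, _ => rfl
  | _, _, _, cons _ t p, u, v => congrArg (Args.cons t) (right_snoc p u v)

theorem left_swap : ∀ {σ ρ : Ty} (p : Args2 σ ρ), p.swap.left = p.right
  | _, _, nil => rfl
  | _, _, cons _ t p => congrArg (Args.cons t) (left_swap p)

theorem right_swap : ∀ {σ ρ : Ty} (p : Args2 σ ρ), p.swap.right = p.left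
  | _, _, nil => rfl
  | _, _, cons s _ p => congrArg (Args.cons s) (right_swap p)

theorem left_normalize (Ω : NormOp) : ∀ {σ ρ : Ty} (p : Args2 σ ρ),
    (p.normalize Ω).left = nfArgs (fun _ s => Ω.nf s) p.left
  | _, _, nil => rfl
  | _, _, cons s _ p => congrArg (Args.cons (Ω.nf s)) (left_normalize Ω p)

theorem right_normalize (Ω : NormOp) : ∀ {σ ρ : Ty} (p : Args2 σ ρ),
    (p.normalize Ω).right = nfArgs (fun _ s => Ω.nf s) p.right
  | _, _, nil => rfl
  | _, _, cons _ t p => congrArg (Args.cons (Ω.nf t)) (right_normalize Ω p)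

end Args2

section ExistsPairHashNf

variable {Ω : NormOp} {E : Set (Tm Ty.o)}

theorem ExistsPairHashNf.of_swap : ∀ {σ ρ : Ty} {p : Args2 σ ρ},
    ExistsPairHashNf Ω E p.swap → ExistsPairHashNf Ω E p
  | _, _, Args2.nil, h => h
  | _, _, Args2.cons _ _ _, h => Or.imp Or.symm ExistsPairHashNf.of_swap h

theorem ExistsPairHashNf.of_snoc : ∀ {σ τ ρ : Ty} {p : Args2 σ (Ty.arr τ ρ)} {u v : Tm τ},
    ExistsPairHashNf Ω E (p.snoc u v) → ExistsPairHashNf Ω E p ∨ hashE E (Ω.nf u) (Ω.nf v)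
  | _, _, _, Args2.nil, _, _, h => Or.inr (h.resolve_right id)
  | _, _, _, Args2.cons _ _ _, _, _, h =>
    h.elim (fun h => Or.inl (Or.inl h)) fun h => (ExistsPairHashNf.of_snoc h).imp_left Or.inr

theorem ExistsPairHashNf.of_mem_diseqs : ∀ {σ ρ : Ty} {p : Args2 σ ρ} {d : Tm Ty.o},
    d ∈ (p.normalize Ω).diseqs → d ∈ E → ExistsPairHashNf Ω E p
  | _, _, Args2.nil, _, hd, _ => (List.not_mem_nil hd).elim
  | _, _, Args2.cons _ _ _, _, hd, hdE => by
    rcases List.mem_cons.mp hd with rfl | hd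
    · exact Or.inl (Or.inl hdE)
    · exact Or.inr (ExistsPairHashNf.of_mem_diseqs hd hdE)

end ExistsPairHashNf

section Compat

variable {Ω : NormOp} {E : Set (Tm Ty.o)}

theorem compat_symm : ∀ {σ : Ty} {s t : Tm σ}, compat Ω E σ s t → compat Ω E σ t s
  | Ty.base 0, _, _, h => ⟨fun hc => h.2 hc.symm, fun hc => h.1 hc.symm⟩
  | Ty.base (_ + 1), _, _, h => fun hc => h hc.symm
  | Ty.arr _ _, _, _, h => fun _ _ huv => compat_symm (h _ _ (compat_symm huv))

theorem compat_of_nf_eq : ∀ {σ : Ty} {s s' t t' : Tm σ},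
    Ω.nf s = Ω.nf s' → Ω.nf t = Ω.nf t' → compat Ω E σ s t → compat Ω E σ s' t'
  | Ty.base 0, _, _, _, _, hs, ht, h => by simp only [compat] at h ⊢; rwa [← hs, ← ht]
  | Ty.base (_ + 1), _, _, _, _, hs, ht, h => by simp only [compat] at h ⊢; rwa [← hs, ← ht]
  | Ty.arr _ _, s, s', t, t', hs, ht, h => fun u v huv =>
    compat_of_nf_eq (by rw [← Ω.n2 s, hs, Ω.n2]) (by rw [← Ω.n2 t, ht, Ω.n2]) (h u v huv)

theorem nf_applyArgs_var_left (x : ℕ) {μ : Ty} {β : ℕ} (p : Args2 μ (Ty.base β)) :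
    Ω.nf (applyArgs (Tm.var x μ) p.left) = applyArgs (Tm.var x μ) (p.normalize Ω).left := by
  rw [Ω.n3 _ (Atomic.var x μ), Args2.left_normalize]

theorem nf_applyArgs_var_right (x : ℕ) {μ : Ty} {β : ℕ} (p : Args2 μ (Ty.base β)) :
    Ω.nf (applyArgs (Tm.var x μ) p.right) = applyArgs (Tm.var x μ) (p.normalize Ω).right := by
  rw [Ω.n3 _ (Atomic.var x μ), Args2.right_normalize]

variable (hE : Evident Ω E)
include hE

theorem not_hashE_of_compat_o {s t : Tm Ty.o} (h : compat Ω E Ty.o s t) :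
    ¬ hashE E (Ω.nf s) (Ω.nf t) := by
  rintro (hd | hd) <;> rcases hE.be _ _ hd with hc | hc
  exacts [h.1 hc, h.2 hc, h.2 hc.symm, h.1 hc.symm]

theorem compat_applyArgs_var_o (x : ℕ) {μ : Ty} (p : Args2 μ Ty.o)
    (hp : ¬ ExistsPairHashNf Ω E p) :
    compat Ω E Ty.o (applyArgs (Tm.var x μ) p.left) (applyArgs (Tm.var x μ) p.right) := by
  have key : ∀ q : Args2 μ Ty.o, ¬ ExistsPairHashNf Ω E q →
      ¬(Ω.nf (applyArgs (Tm.var x μ) q.left) ∈ E ∧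
        Tm.Not (Ω.nf (applyArgs (Tm.var x μ) q.right)) ∈ E) := by
    rintro q hq ⟨hl, hr⟩
    rw [nf_applyArgs_var_left] at hl
    rw [nf_applyArgs_var_right] at hr
    obtain ⟨d, hd, hdE⟩ := hE.mat x _ hl hr
    exact hq (ExistsPairHashNf.of_mem_diseqs hd hdE)
  refine ⟨key p hp, fun h => key p.swap (mt ExistsPairHashNf.of_swap hp) ?_⟩
  rwa [Args2.left_swap, Args2.right_swap, and_comm]

theorem compat_applyArgs_var_sort (x : ℕ) {μ : Ty} {α : ℕ} (p : Args2 μ (Ty.sort α))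
    (hp : ¬ ExistsPairHashNf Ω E p) :
    compat Ω E (Ty.sort α) (applyArgs (Tm.var x μ) p.left) (applyArgs (Tm.var x μ) p.right) := by
  have key : ∀ q : Args2 μ (Ty.sort α), ¬ ExistsPairHashNf Ω E q →
      Tm.Diseq (Ω.nf (applyArgs (Tm.var x μ) q.left))
        (Ω.nf (applyArgs (Tm.var x μ) q.right)) ∉ E := by
    intro q hq hq'
    rw [nf_applyArgs_var_left, nf_applyArgs_var_right] at hq'
    obtain ⟨d, hd, hdE⟩ := hE.dec x _ hq'
    exact hq (ExistsPairHashNf.of_mem_diseqs hd hdE)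
  rintro (h | h)
  · exact key p hp h
  · exact key p.swap (mt ExistsPairHashNf.of_swap hp) (by rwa [Args2.left_swap, Args2.right_swap])

/-- The two statements depend on each other: at `σ → τ`, the first needs the second at `σ`
(variables are self-compatible witnesses for functional extensionality), and the second needs
the first at `σ` (to extend the spine by a compatible pair). -/
theorem not_hashE_of_compat_and_compat_applyArgs_var : ∀ σ : Ty,
    (∀ s t : Tm σ, compat Ω E σ s t → ¬ hashE E (Ω.nf s) (Ω.nf t)) ∧
    (∀ (x : ℕ) (μ : Ty) (p : Args2 μ σ), ¬ ExistsPairHashNf Ω E p →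
      compat Ω E σ (applyArgs (Tm.var x μ) p.left) (applyArgs (Tm.var x μ) p.right))
  | Ty.base 0 => ⟨fun _ _ => not_hashE_of_compat_o hE, fun x _ => compat_applyArgs_var_o hE x⟩
  | Ty.base (_ + 1) => ⟨fun _ _ h => h, fun x _ => compat_applyArgs_var_sort hE x⟩
  | Ty.arr σ τ => by
    obtain ⟨hσ, spineσ⟩ := not_hashE_of_compat_and_compat_applyArgs_var σ
    obtain ⟨hτ, spineτ⟩ := not_hashE_of_compat_and_compat_applyArgs_var τ
    have hdiseq : ∀ s t : Tm (Ty.arr σ τ), compat Ω E _ s t →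
        Tm.Diseq (Ω.nf s) (Ω.nf t) ∉ E := by
      intro s t hst hd
      obtain ⟨x, hx⟩ := hE.fe _ _ hd
      rw [Ω.n2, Ω.n2] at hx
      exact hτ _ _ (hst _ _ (spineσ x σ Args2.nil id)) (Or.inl hx)
    refine ⟨fun s t hst h => h.elim (hdiseq s t hst) (hdiseq t s (compat_symm hst)), ?_⟩
    intro x μ p hp u v huv
    have := spineτ x μ (p.snoc u v) fun h => (ExistsPairHashNf.of_snoc h).elim hp (hσ u v huv)
    rwa [Args2.left_snoc, Args2.right_snoc, applyArgs_snoc, applyArgs_snoc] at this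

theorem not_hashE_of_compat {σ : Ty} {s t : Tm σ} (h : compat Ω E σ s t) :
    ¬ hashE E (Ω.nf s) (Ω.nf t) :=
  (not_hashE_of_compat_and_compat_applyArgs_var hE σ).1 s t h

theorem compat_var_self (x : ℕ) (σ : Ty) : compat Ω E σ (Tm.var x σ) (Tm.var x σ) :=
  (not_hashE_of_compat_and_compat_applyArgs_var hE σ).2 x σ Args2.nil id

end Compat

section Reflexivity

variable {Ω : NormOp} {E : Set (Tm Ty.o)}

theorem option_rel_compat_updS {θ θ' : ℕ → (σ : Ty) → Option (Tm σ)}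
    (h : ∀ k σ, Option.Rel (compat Ω E σ) (θ k σ) (θ' k σ)) (x : ℕ) (σ : Ty) {r r' : Tm σ}
    (hr : compat Ω E σ r r') (k : ℕ) (τ : Ty) :
    Option.Rel (compat Ω E τ) (updS θ x σ r k τ) (updS θ' x σ r' k τ) := by
  unfold updS
  split_ifs with hk
  · obtain ⟨rfl, rfl⟩ := hk
    exact Option.Rel.some hr
  · exact h k τ

variable (hE : Evident Ω E)
include hE

theorem compat_neg_self : compat Ω E (Ty.arr Ty.o Ty.o) Tm.neg Tm.neg := by
  intro a b hab
  have hnf : ∀ c : Tm Ty.o, Ω.nf (Tm.app Tm.neg c) = Tm.Not (Ω.nf c) := fun c =>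
    Ω.n3 Tm.neg Atomic.neg (Args.cons c Args.nil)
  simp only [compat, hnf]
  exact ⟨fun h => hab.2 ⟨h.1, hE.dn _ h.2⟩, fun h => hab.1 ⟨hE.dn _ h.1, h.2⟩⟩

/-- The arrow case instantiates `fq` with the normal form of the fresh variable that `fe`
provides, since only normal terms may be plugged into `fq`. -/
theorem diseq_nf_notMem_of_eqn_nf_mem : ∀ {σ : Ty} {a b c d : Tm σ},
    compat Ω E σ a b → compat Ω E σ c d →
    Tm.Eqn (Ω.nf a) (Ω.nf c) ∈ E → Tm.Diseq (Ω.nf b) (Ω.nf d) ∉ E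
  | Ty.base 0, _, _, _, _, hab, hcd, heq, hdis => by
    rcases hE.bq _ _ heq with ⟨ha, hc⟩ | ⟨ha, hc⟩ <;>
      rcases hE.be _ _ hdis with ⟨hb, hd⟩ | ⟨hb, hd⟩
    exacts [hcd.1 ⟨hc, hd⟩, hab.1 ⟨ha, hb⟩, hab.2 ⟨ha, hb⟩, hcd.2 ⟨hc, hd⟩]
  | Ty.base (_ + 1), _, _, _, _, hab, hcd, heq, hdis => by
    rcases hE.con _ _ _ _ heq hdis with ⟨h, -⟩ | ⟨-, h⟩
    exacts [not_hashE_of_compat hE hab (Or.inl h), not_hashE_of_compat hE hcd (Or.inl h)]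
  | Ty.arr σ _, _, _, _, _, hab, hcd, heq, hdis => by
    obtain ⟨x, hx⟩ := hE.fe _ _ hdis
    rw [Ω.n2, Ω.n2] at hx
    have hfq := hE.fq _ _ heq (Ω.nf (Tm.var x σ)) (Ω.n1 _)
    rw [Ω.n2, Ω.n2] at hfq
    have hx' : compat Ω E σ (Ω.nf (Tm.var x σ)) (Tm.var x σ) :=
      compat_of_nf_eq (Ω.n1 _).symm rfl (compat_var_self hE x σ)
    exact diseq_nf_notMem_of_eqn_nf_mem (hab _ _ hx') (hcd _ _ hx') hfq hx

theorem compat_eq_self (σ : Ty) : compat Ω E (Ty.arr σ (Ty.arr σ Ty.o)) (Tm.eq σ) (Tm.eq σ) := by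
  intro a b hab c d hcd
  have hnf : ∀ u v : Tm σ, Ω.nf (Tm.Eqn u v) = Tm.Eqn (Ω.nf u) (Ω.nf v) := fun u v =>
    Ω.n3 (Tm.eq σ) (Atomic.eq σ) (Args.cons u (Args.cons v Args.nil))
  change ¬(Ω.nf (Tm.Eqn a c) ∈ E ∧ Tm.Not (Ω.nf (Tm.Eqn b d)) ∈ E) ∧
    ¬(Tm.Not (Ω.nf (Tm.Eqn a c)) ∈ E ∧ Ω.nf (Tm.Eqn b d) ∈ E)
  rw [hnf, hnf]
  exact ⟨fun h => diseq_nf_notMem_of_eqn_nf_mem hE hab hcd h.1 h.2,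
    fun h => diseq_nf_notMem_of_eqn_nf_mem hE (compat_symm hab) (compat_symm hcd) h.2 h.1⟩

theorem compat_sub : ∀ {τ : Ty} (b : Tm τ) {θ θ' : ℕ → (σ : Ty) → Option (Tm σ)},
    (∀ k σ, Option.Rel (compat Ω E σ) (θ k σ) (θ' k σ)) →
    compat Ω E τ (Ω.sub θ b) (Ω.sub θ' b)
  | _, Tm.var n σ, θ, θ', h => by
    rw [Ω.s1, Ω.s1]
    have hn := h n σ
    revert hn
    generalize θ n σ = o, θ' n σ = o'
    rintro (huv | _)
    exacts [huv, compat_var_self hE n σ]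
  | _, Tm.neg, _, _, _ => by rw [Ω.s1neg, Ω.s1neg]; exact compat_neg_self hE
  | _, Tm.eq σ, _, _, _ => by rw [Ω.s1eq, Ω.s1eq]; exact compat_eq_self hE σ
  | _, Tm.app f a, _, _, h => by
    rw [Ω.s2, Ω.s2]
    exact compat_sub f h _ _ (compat_sub a h)
  | _, Tm.lam x σ b, θ, θ', h => fun r r' hr =>
    compat_of_nf_eq (Ω.s3 θ x σ b r).symm (Ω.s3 θ' x σ b r').symm
      (compat_sub b (option_rel_compat_updS h x σ hr))

theorem compat_refl {σ : Ty} (u : Tm σ) : compat Ω E σ u u :=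
  compat_of_nf_eq (Ω.s4 u) (Ω.s4 u) (compat_sub hE u fun _ _ => Option.Rel.none)

end Reflexivity

section Values

variable {Ω : NormOp} {E : Set (Tm Ty.o)}

theorem exists_value_o (T : Set (Tm Ty.o)) (hT : ∀ s ∈ T, ∀ t ∈ T, compat Ω E Ty.o s t) :
    ∃ b : Bool, ∀ t ∈ T, (sem Ω E Ty.o).2 t b := by
  by_cases hpos : ∃ s ∈ T, Ω.nf s ∈ E
  · obtain ⟨s, hs, hsE⟩ := hpos
    exact ⟨true, fun t ht hneg => (hT s hs t ht).1 ⟨hsE, hneg⟩⟩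
  · simp only [not_exists, not_and] at hpos
    exact ⟨false, hpos⟩

theorem compat_of_value_o {b : Bool} {s t : Tm Ty.o} (hs : (sem Ω E Ty.o).2 s b)
    (ht : (sem Ω E Ty.o).2 t b) : compat Ω E Ty.o s t := by
  cases b
  exacts [⟨fun h => hs h.1, fun h => ht h.2⟩, ⟨fun h => ht h.2, fun h => hs h.1⟩]

theorem exists_isDiscriminant_superset {α : ℕ} (S : Set (Tm (Ty.sort α)))
    (hS : ∀ u ∈ S, Discriminating E u) (hS' : ∀ s ∈ S, ∀ t ∈ S, Tm.Diseq s t ∉ E) :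
    ∃ a, S ⊆ a ∧ IsDiscriminant E α a := by
  let F : Set (Set (Tm (Ty.sort α))) :=
    {b | (∀ u ∈ b, Discriminating E u) ∧ ∀ s ∈ b, ∀ t ∈ b, Tm.Diseq s t ∉ E}
  have hchain : ∀ c ⊆ F, IsChain (· ⊆ ·) c → c.Nonempty → ∃ ub ∈ F, ∀ b ∈ c, b ⊆ ub := by
    intro c hcF hc _
    refine ⟨⋃₀ c, ⟨?_, ?_⟩, fun b hb => Set.subset_sUnion_of_mem hb⟩
    · rintro u ⟨b, hb, hub⟩
      exact (hcF hb).1 u hub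
    · rintro s ⟨b₁, hb₁, hs⟩ t ⟨b₂, hb₂, ht⟩
      rcases hc.total hb₁ hb₂ with h | h
      exacts [(hcF hb₂).2 s (h hs) t ht, (hcF hb₁).2 s hs t (h ht)]
  obtain ⟨a, hSa, ha⟩ := zorn_subset_nonempty F hchain S ⟨hS, hS'⟩
  exact ⟨a, hSa, ha.1.1, ha.1.2, fun b hab hb hb' => (ha.2 ⟨hb, hb'⟩ hab).antisymm hab⟩

theorem exists_value_sort (hE : Evident Ω E) {α : ℕ} (T : Set (Tm (Ty.sort α)))
    (hT : ∀ s ∈ T, ∀ t ∈ T, compat Ω E (Ty.sort α) s t) :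
    ∃ a, ∀ t ∈ T, (sem Ω E (Ty.sort α)).2 t a := by
  obtain ⟨a, hSa, ha⟩ := exists_isDiscriminant_superset
    {w | (∃ t ∈ T, Ω.nf t = w) ∧ Discriminating E w} (fun _ hu => hu.2)
    (by
      rintro _ ⟨⟨s, hs, rfl⟩, -⟩ _ ⟨⟨t, ht, rfl⟩, -⟩ hd
      exact not_hashE_of_compat hE (hT s hs t ht) (Or.inl hd))
  exact ⟨a, fun t ht => ⟨ha, fun hd => hSa ⟨⟨t, ht, rfl⟩, hd⟩⟩⟩

theorem compat_of_value_sort {α : ℕ} {a : Set (Tm (Ty.sort α))} {s t : Tm (Ty.sort α)}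
    (hs : (sem Ω E (Ty.sort α)).2 s a) (ht : (sem Ω E (Ty.sort α)).2 t a) :
    compat Ω E (Ty.sort α) s t := by
  rintro (h | h)
  · exact hs.1.2.1 _ (hs.2 ⟨_, Or.inl h⟩) _ (ht.2 ⟨_, Or.inr h⟩) h
  · exact hs.1.2.1 _ (ht.2 ⟨_, Or.inl h⟩) _ (hs.2 ⟨_, Or.inr h⟩) h

theorem exists_value_arr {σ τ : Ty}
    (hσ : ∀ (x : (sem Ω E σ).1) (u v : Tm σ),
      (sem Ω E σ).2 u x → (sem Ω E σ).2 v x → compat Ω E σ u v)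
    (hτ : ∀ T : Set (Tm τ), (∀ s ∈ T, ∀ t ∈ T, compat Ω E τ s t) →
      ∃ a, ∀ t ∈ T, (sem Ω E τ).2 t a)
    (T : Set (Tm (Ty.arr σ τ))) (hT : ∀ s ∈ T, ∀ t ∈ T, compat Ω E _ s t) :
    ∃ f, ∀ t ∈ T, (sem Ω E (Ty.arr σ τ)).2 t f := by
  have hval : ∀ x : {x : (sem Ω E σ).1 // ∃ w, (sem Ω E σ).2 w x}, ∃ a,
      ∀ z ∈ {z | ∃ s ∈ T, ∃ w, (sem Ω E σ).2 w x.1 ∧ z = Tm.app s w}, (sem Ω E τ).2 z a := by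
    refine fun x => hτ _ ?_
    rintro _ ⟨s, hs, w, hw, rfl⟩ _ ⟨t, ht, w', hw', rfl⟩
    exact hT s hs t ht w w' (hσ x.1 w w' hw hw')
  choose f hf using hval
  exact ⟨f, fun t ht w x hw => hf ⟨x, w, hw⟩ _ ⟨t, ht, w, hw, rfl⟩⟩

theorem compat_of_value_arr (hE : Evident Ω E) {σ τ : Ty}
    (hσ : ∀ T : Set (Tm σ), (∀ s ∈ T, ∀ t ∈ T, compat Ω E σ s t) →
      ∃ a, ∀ t ∈ T, (sem Ω E σ).2 t a)
    (hτ : ∀ (y : (sem Ω E τ).1) (u v : Tm τ),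
      (sem Ω E τ).2 u y → (sem Ω E τ).2 v y → compat Ω E τ u v)
    {f : (sem Ω E (Ty.arr σ τ)).1} {s t : Tm (Ty.arr σ τ)}
    (hs : (sem Ω E (Ty.arr σ τ)).2 s f) (ht : (sem Ω E (Ty.arr σ τ)).2 t f) :
    compat Ω E (Ty.arr σ τ) s t := by
  intro u v huv
  obtain ⟨x, hx⟩ := hσ {u, v} (by
    rintro _ (rfl | rfl) _ (rfl | rfl)
    exacts [compat_refl hE _, huv, compat_symm huv, compat_refl hE _])
  exact hτ _ _ _ (hs u x (hx u (.inl rfl))) (ht v x (hx v (.inr rfl)))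

theorem exists_value_and_compat_of_value (hE : Evident Ω E) : ∀ σ : Ty,
    (∀ T : Set (Tm σ), (∀ s ∈ T, ∀ t ∈ T, compat Ω E σ s t) →
      ∃ a, ∀ t ∈ T, (sem Ω E σ).2 t a) ∧
    (∀ (a : (sem Ω E σ).1) (s t : Tm σ),
      (sem Ω E σ).2 s a → (sem Ω E σ).2 t a → compat Ω E σ s t)
  | Ty.base 0 => ⟨exists_value_o, fun _ _ _ => compat_of_value_o⟩
  | Ty.base (_ + 1) => ⟨exists_value_sort hE, fun _ _ _ => compat_of_value_sort⟩
  | Ty.arr σ τ =>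
    have ihσ := exists_value_and_compat_of_value hE σ
    have ihτ := exists_value_and_compat_of_value hE τ
    ⟨exists_value_arr ihσ.2 ihτ.1, fun _ _ _ => compat_of_value_arr hE ihσ.1 ihτ.2⟩

end Values

theorem stmt8_general (Ω : NormOp) (E : Set (Tm Ty.o)) (hE : Evident Ω E)
    (σ : Ty) (T : Set (Tm σ)) :
    (∀ s ∈ T, ∀ t ∈ T, compat Ω E σ s t) ↔
    ∃ a : (sem Ω E σ).1, (∃ u : Tm σ, (sem Ω E σ).2 u a) ∧ ∀ t ∈ T, (sem Ω E σ).2 t a := by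
  obtain ⟨exists_value, compat_of_value⟩ := exists_value_and_compat_of_value hE σ
  constructor
  · intro hT
    rcases T.eq_empty_or_nonempty with rfl | ⟨u, hu⟩
    · obtain ⟨a, ha⟩ := exists_value {Tm.var 0 σ} (by simp [compat_var_self hE])
      exact ⟨a, ⟨_, ha _ rfl⟩, by simp⟩
    · obtain ⟨a, ha⟩ := exists_value T hT
      exact ⟨a, ⟨u, ha u hu⟩, ha⟩
  · rintro ⟨a, -, ha⟩ s hs t ht
    exact compat_of_value a s t (ha s hs) (ha t ht)

/-- Common Value Lemma: a set `T` of terms of type `σ` is compatible iff there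
is a value `a ∈ D(σ)` with `t ≈_σ a` for all `t ∈ T`. -/
theorem stmt8 (Ω : NormOp) (E : Set (Tm Ty.o)) (hE : Evident Ω E)
    (hnorm : ∀ s ∈ E, Ω.nf s = s) (σ : Ty) (T : Set (Tm σ)) :
    (∀ s ∈ T, ∀ t ∈ T, compat Ω E σ s t) ↔
    ∃ a : (sem Ω E σ).1, (∃ u : Tm σ, (sem Ω E σ).2 u a) ∧ ∀ t ∈ T, (sem Ω E σ).2 t a :=
  stmt8_general Ω E hE σ T
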